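/- arXiv:1908.03914 — 4 statements merged into one kernel-verified Lean document; each statement's English description precedes it below -/
import Mathlib

section
/- Let F denote the set of functions f : ℕ → ℤ such that 2ⁿ ∣ (Δⁿf)(x) for all n ≥ 0 and all x ≥ 0, let b ∈ F, and define the sequence of functions f₁ = b and f_{k+1}(x) = b(x) · ⟨f_k, f_k⟩(x) for k ≥ 1 (so f_k is the average weight function of the complete binary tree of depth k, and each f_k ∈ F). Then for all k ≥ 1 and all m ≥ 0, ε_m^{f_k} = ε_m^b · (ε_0^b)^{2^k − 2} (an equality in {0,1}). -/
/-- The finite difference operator: `(Δ f)(x) = f(x+1) - f(x)`. -/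
def delta (f : ℕ → ℤ) : ℕ → ℤ := fun x => f (x + 1) - f x

/-- Membership in the set `F` of functions `f : ℕ → ℤ` with `2^n ∣ (Δ^n f)(x)`
for all `n` and `x`. -/
def memF (f : ℕ → ℤ) : Prop := ∀ (n : ℕ) (x : ℕ), (2 : ℤ) ^ n ∣ (delta^[n] f) x

/-- For `f ∈ F`, `eps f n` is the element of `{0, 1}` with
`(Δ^n f)(x) ≡ eps f n · 2^n (mod 2^(n+1))` for all `x`. -/
def eps (f : ℕ → ℤ) (n : ℕ) : ℤ := ((delta^[n] f) 0 / 2 ^ n) % 2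

lemma iter_delta_add (f g : ℕ → ℤ) (n x : ℕ) :
    delta^[n] (fun y => f y + g y) x = delta^[n] f x + delta^[n] g x := by
  induction n generalizing f g with
  | zero => simp
  | succ n ih =>
    rw [Function.iterate_succ_apply, Function.iterate_succ_apply,
      Function.iterate_succ_apply]
    have : delta (fun y => f y + g y) = fun y => delta f y + delta g y := by
      funext y; simp [delta]; ring
    rw [this, ih]

lemma iter_delta_shift (f : ℕ → ℤ) (n x : ℕ) :
    delta^[n] (fun y => f (y + 1)) x = delta^[n] f (x + 1) := by
  induction n generalizing f with
  | zero => simp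
  | succ n ih =>
    rw [Function.iterate_succ_apply, Function.iterate_succ_apply]
    have : delta (fun y => f (y + 1)) = fun y => delta f (y + 1) := by
      funext y; simp [delta]
    rw [this, ih]

lemma pascal_sum (u : ℕ → ℤ) (n : ℕ) :
    ∑ i ∈ Finset.range (n+1+1), ((n+1).choose i : ℤ) * u i
      = ∑ i ∈ Finset.range (n+1), (n.choose i : ℤ) * u i
        + ∑ i ∈ Finset.range (n+1), (n.choose i : ℤ) * u (i+1) := by
  rw [Finset.sum_range_succ' (fun i => ((n+1).choose i : ℤ) * u i)]
  have h1 : ∀ i : ℕ, (((n+1).choose (i+1) : ℕ) : ℤ) = (n.choose i : ℤ) + (n.choose (i+1) : ℤ) := by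
    intro i; rw [Nat.choose_succ_succ]; push_cast; ring
  simp only [h1, add_mul]
  rw [Finset.sum_add_distrib]
  have h2 : ∑ i ∈ Finset.range (n+1), (n.choose (i+1) : ℤ) * u (i+1)
      + ((n+1).choose 0 : ℤ) * u 0
      = ∑ i ∈ Finset.range (n+1), (n.choose i : ℤ) * u i := by
    rw [show (((n+1).choose 0 : ℕ) : ℤ) = ((n.choose 0 : ℕ) : ℤ) by simp]
    rw [← Finset.sum_range_succ' (fun i => (n.choose i : ℤ) * u i)]
    rw [Finset.sum_range_succ]
    simp [Nat.choose_succ_self]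
  rw [add_assoc, add_comm (∑ i ∈ Finset.range (n+1), (n.choose i : ℤ) * u (i+1))]
  rw [h2]

lemma leibniz (f g : ℕ → ℤ) (n x : ℕ) :
    delta^[n] (fun y => f y * g y) x
      = ∑ i ∈ Finset.range (n+1),
          (n.choose i : ℤ) * (delta^[i] f (x + (n - i)) * delta^[n - i] g x) := by
  induction n generalizing f g with
  | zero => simp
  | succ n ih =>
    have hd : delta (fun y => f y * g y)
        = fun y => f (y+1) * delta g y + delta f y * g y := by
      funext y; simp [delta]; ring
    rw [Function.iterate_succ_apply, hd, iter_delta_add]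
    simp only [ih]
    rw [pascal_sum (fun i => delta^[i] f (x + (n + 1 - i)) * delta^[n + 1 - i] g x) n]
    congr 1
    · apply Finset.sum_congr rfl
      intro i hi
      rw [Finset.mem_range] at hi
      have h1 : delta^[i] (fun y => f (y+1)) (x + (n - i)) = delta^[i] f (x + (n - i) + 1) :=
        iter_delta_shift f i _
      have h2 : x + (n - i) + 1 = x + (n + 1 - i) := by omega
      have h3 : delta^[n-i] (delta g) x = delta^[n+1-i] g x := by
        have h : n + 1 - i = (n - i) + 1 := by omega
        rw [h, Function.iterate_succ_apply]
      rw [h1, h2, h3]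
    · apply Finset.sum_congr rfl
      intro i hi
      rw [Finset.mem_range] at hi
      have h1 : delta^[i] (delta f) (x + (n - i)) = delta^[i+1] f (x + (n + 1 - (i+1))) := by
        rw [show x + (n + 1 - (i+1)) = x + (n - i) from by omega, Function.iterate_succ_apply]
      have h2 : n - i = n + 1 - (i + 1) := by omega
      rw [h1, ← h2]

lemma memF_shift {f : ℕ → ℤ} (hf : memF f) : memF (fun y => f (y+1)) := by
  intro n x
  rw [iter_delta_shift]
  exact hf n (x+1)

lemma memF_mul {f g : ℕ → ℤ} (hf : memF f) (hg : memF g) :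
    memF (fun y => f y * g y) := by
  intro n x
  rw [leibniz]
  apply Finset.dvd_sum
  intro i hi
  rw [Finset.mem_range] at hi
  have h : (2:ℤ)^n = 2^i * 2^(n-i) := by
    rw [← pow_add]; congr 1; omega
  rw [h]
  exact Dvd.dvd.mul_left (mul_dvd_mul (hf i _) (hg (n-i) x)) _

lemma dvd_sub_base {f : ℕ → ℤ} (hf : memF f) (n x : ℕ) :
    (2:ℤ)^(n+1) ∣ delta^[n] f x - delta^[n] f 0 := by
  induction x with
  | zero => simp
  | succ x ih =>
    have h : delta^[n] f (x+1) - delta^[n] f 0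
        = delta^[n+1] f x + (delta^[n] f x - delta^[n] f 0) := by
      rw [Function.iterate_succ_apply']
      simp [delta]
    rw [h]
    exact dvd_add (hf (n+1) x) ih

lemma two_dvd_div {f : ℕ → ℤ} (hf : memF f) (n x : ℕ) :
    (2:ℤ) ∣ delta^[n] f x / 2^n - delta^[n] f 0 / 2^n := by
  have hx := Int.mul_ediv_cancel' (hf n x)
  have h0 := Int.mul_ediv_cancel' (hf n 0)
  have h2 : (2:ℤ)^n * (delta^[n] f x / 2^n - delta^[n] f 0 / 2^n)
      = delta^[n] f x - delta^[n] f 0 := by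
    rw [mul_sub, hx, h0]
  have h3 : (2:ℤ)^n * 2 ∣ (2:ℤ)^n * (delta^[n] f x / 2^n - delta^[n] f 0 / 2^n) := by
    rw [h2, mul_comm ((2:ℤ)^n) 2, ← pow_succ']
    exact dvd_sub_base hf n x
  exact (mul_dvd_mul_iff_left (a := (2:ℤ)^n) (by positivity)).mp h3

lemma eps_cast {f : ℕ → ℤ} (hf : memF f) (n x : ℕ) :
    ((eps f n : ℤ) : ZMod 2) = ((delta^[n] f x / 2^n : ℤ) : ZMod 2) := by
  unfold eps
  rw [ZMod.intCast_eq_intCast_iff]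
  have h1 : delta^[n] f 0 / 2^n % 2 ≡ delta^[n] f 0 / 2^n [ZMOD 2] :=
    Int.emod_emod_of_dvd _ dvd_rfl
  exact h1.trans (Int.modEq_iff_dvd.mpr (two_dvd_div hf n x))

lemma eps_mul {f g : ℕ → ℤ} (hf : memF f) (hg : memF g) (n : ℕ) :
    ((eps (fun y => f y * g y) n : ℤ) : ZMod 2)
      = ∑ i ∈ Finset.range (n+1),
          (n.choose i : ZMod 2) * ((eps f i : ℤ) : ZMod 2) * ((eps g (n-i) : ℤ) : ZMod 2) := by
  have key : delta^[n] (fun y => f y * g y) 0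
      = 2^n * ∑ i ∈ Finset.range (n+1),
          (n.choose i : ℤ) * (delta^[i] f (n-i) / 2^i) * (delta^[n-i] g 0 / 2^(n-i)) := by
    rw [leibniz, Finset.mul_sum]
    apply Finset.sum_congr rfl
    intro i hi
    rw [Finset.mem_range] at hi
    have hA := Int.mul_ediv_cancel' (hf i (n-i))
    have hB := Int.mul_ediv_cancel' (hg (n-i) 0)
    have hp : (2:ℤ)^n = 2^i * 2^(n-i) := by rw [← pow_add]; congr 1; omega
    calc (n.choose i : ℤ) * (delta^[i] f (0 + (n - i)) * delta^[n-i] g 0)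
        = (n.choose i : ℤ) * ((2^i * (delta^[i] f (n-i) / 2^i))
            * (2^(n-i) * (delta^[n-i] g 0 / 2^(n-i)))) := by
          rw [hA, hB]; norm_num
      _ = 2^n * ((n.choose i : ℤ) * (delta^[i] f (n-i) / 2^i)
            * (delta^[n-i] g 0 / 2^(n-i))) := by
          rw [hp]; ring
  rw [eps_cast (memF_mul hf hg) n 0, key, Int.mul_ediv_cancel_left _ (by positivity)]
  push_cast
  apply Finset.sum_congr rfl
  intro i hi
  rw [eps_cast hf i (n-i), eps_cast hg (n-i) 0]

lemma eps_shift {f : ℕ → ℤ} (hf : memF f) (n : ℕ) :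
    eps (fun y => f (y+1)) n = eps f n := by
  unfold eps
  rw [iter_delta_shift]
  have h01 : (0:ℕ) + 1 = 1 := rfl
  rw [h01]
  have := two_dvd_div hf n 1
  omega

lemma central_choose_even (i : ℕ) (hi : 1 ≤ i) : 2 ∣ (2*i).choose i := by
  obtain ⟨j, rfl⟩ : ∃ j, i = j + 1 := ⟨i - 1, by omega⟩
  have h : 2*(j+1) = (2*j+1) + 1 := by ring
  rw [h, Nat.choose_succ_succ]
  have hs := Nat.choose_symm (show j+1 ≤ 2*j+1 by omega)
  rw [show 2*j+1-(j+1) = j from by omega] at hs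
  show 2 ∣ (2*j+1).choose j + (2*j+1).choose (j+1)
  omega

lemma sym_sum_zero (a : ℕ → ZMod 2) (n : ℕ) (hn : 1 ≤ n) :
    ∑ i ∈ Finset.range (n+1), (n.choose i : ZMod 2) * a i * a (n - i) = 0 := by
  apply Finset.sum_involution (g := fun i _ => n - i)
  · intro i hi
    rw [Finset.mem_range] at hi
    have h1 : n - (n - i) = i := by omega
    have h2 : (n.choose (n-i) : ZMod 2) = (n.choose i : ZMod 2) := by
      rw [Nat.choose_symm (by omega)]
    rw [h1, h2]
    have : (n.choose i : ZMod 2) * a i * a (n-i) + (n.choose i : ZMod 2) * a (n-i) * a i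
        = 2 * ((n.choose i : ZMod 2) * a i * a (n-i)) := by ring
    rw [this]
    simp [show (2 : ZMod 2) = 0 from rfl]
  · intro i hi hne
    rw [Finset.mem_range] at hi
    intro heq
    apply hne
    have h2i : n = 2 * i := by omega
    have : (n.choose i : ZMod 2) = 0 := by
      rw [ZMod.natCast_eq_zero_iff]
      rw [h2i]
      exact central_choose_even i (by omega)
    rw [this, zero_mul, zero_mul]
  · intro i hi
    rw [Finset.mem_range] at hi ⊢
    omega
  · intro i hi
    rw [Finset.mem_range] at hi
    omega

lemma eps01 (f : ℕ → ℤ) (n : ℕ) : eps f n = 0 ∨ eps f n = 1 :=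
  Int.emod_two_eq_zero_or_one _

lemma cast01 {a b : ℤ} (ha : a = 0 ∨ a = 1) (hb : b = 0 ∨ b = 1)
    (h : ((a : ℤ) : ZMod 2) = ((b : ℤ) : ZMod 2)) : a = b := by
  rcases ha with rfl | rfl <;> rcases hb with rfl | rfl <;> revert h <;> decide

lemma rhs01 (a c : ℤ) (ha : a = 0 ∨ a = 1) (hc : c = 0 ∨ c = 1) (e : ℕ) :
    a * c ^ e = 0 ∨ a * c ^ e = 1 := by
  rcases ha with rfl | rfl
  · left; ring
  · rcases hc with rfl | rfl
    · rcases Nat.eq_zero_or_pos e with rfl | he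
      · right; norm_num
      · left; rw [zero_pow (by omega)]; ring
    · right; norm_num


/-- For the average weight functions `f_k` of complete binary trees of depth `k`
(`f_1 = b`, `f_{k+1}(x) = b(x) · ⟨f_k, f_k⟩(x)`), one has
`ε_m^{f_k} = ε_m^b · (ε_0^b)^(2^k - 2)`. -/
theorem epsilon_complete_binary_tree
    (b : ℕ → ℤ) (hb : memF b)
    (f : ℕ → ℕ → ℤ) (hf1 : f 1 = b)
    (hfk : ∀ k : ℕ, 1 ≤ k → ∀ x : ℕ,
      f (k + 1) x = b x * ((f k (x + 1) * f k x + f k x * f k (x + 1)) / 2)) :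
    ∀ k : ℕ, 1 ≤ k → ∀ m : ℕ,
      eps (f k) m = eps b m * (eps b 0) ^ (2 ^ k - 2) := by
  have main : ∀ k : ℕ, 1 ≤ k → memF (f k) ∧ ∀ m : ℕ,
      eps (f k) m = eps b m * (eps b 0) ^ (2 ^ k - 2) := by
    intro k hk
    induction k, hk using Nat.le_induction with
    | base =>
      rw [hf1]
      exact ⟨hb, fun m => by norm_num⟩
    | succ k hk ih =>
      obtain ⟨hFk, hEk⟩ := ih
      have hfe : f (k+1) = fun x => b x * ((fun y => f k (y+1) * f k y) x) := by
        funext x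
        rw [hfk k hk x]
        congr 1
        have h2 : f k (x+1) * f k x + f k x * f k (x+1) = 2 * (f k (x+1) * f k x) := by ring
        rw [h2, Int.mul_ediv_cancel_left _ two_ne_zero]
      set g : ℕ → ℤ := fun y => f k (y+1) * f k y with hg
      have hmg : memF g := memF_mul (memF_shift hFk) hFk
      have hmf : memF (f (k+1)) := by rw [hfe]; exact memF_mul hb hmg
      refine ⟨hmf, fun m => ?_⟩
      have hgeps : ∀ j : ℕ, ((eps g j : ℤ) : ZMod 2)
          = if j = 0 then ((eps (f k) 0 : ℤ) : ZMod 2)^2 else 0 := by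
        intro j
        rw [hg]
        simp only [eps_mul (memF_shift hFk) hFk, eps_shift hFk]
        rcases Nat.eq_zero_or_pos j with rfl | hj
        · simp [sq]
        · rw [if_neg (by omega)]
          exact sym_sum_zero (fun i => ((eps (f k) i : ℤ) : ZMod 2)) j hj
      have hmain : ((eps (f (k+1)) m : ℤ) : ZMod 2)
          = ((eps b m : ℤ) : ZMod 2) * ((eps (f k) 0 : ℤ) : ZMod 2)^2 := by
        rw [hfe, eps_mul hb hmg m, Finset.sum_range_succ]
        have hz : ∑ i ∈ Finset.range m,
            (m.choose i : ZMod 2) * ((eps b i : ℤ):ZMod 2) * ((eps g (m-i) : ℤ):ZMod 2) = 0 := by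
          apply Finset.sum_eq_zero
          intro i hi
          rw [Finset.mem_range] at hi
          rw [hgeps (m-i), if_neg (by omega)]
          ring
        rw [hz, zero_add, Nat.sub_self, hgeps 0, if_pos rfl, Nat.choose_self]
        push_cast
        ring
      have hpow : ∀ c : ZMod 2, (c * c^(2^k-2))^2 = c^(2^(k+1)-2) := by
        intro c
        rw [← pow_succ', ← pow_mul]
        congr 1
        have h1 : 2^1 ≤ 2^k := Nat.pow_le_pow_right (by norm_num) hk
        have h2 : 2^(k+1) = 2*2^k := by rw [pow_succ]; ring
        simp only [pow_one] at h1
        omega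
      apply cast01 (eps01 _ _) (rhs01 (eps b m) (eps b 0) (eps01 b m) (eps01 b 0) _)
      rw [hmain, hEk 0]
      push_cast
      rw [hpow]
  intro k hk m
  exact (main k hk).2 m
end

section
/- Let q ≥ 2 be an integer and let F_q denote the set of functions f : ℕ → ℤ such that qⁿ ∣ (Δⁿf)(x) for all n ≥ 0 and all x ≥ 0. Then F_q is closed under the following operations: (i) the shift f ↦ Sf; (ii) the pointwise product (f, g) ↦ f·g; (iii) the operation (f₁, …, f_q) ↦ ⟨f₁, …, f_q⟩, where moreover for f₁, …, f_q ∈ F_q the integer Σ_{i=1}^{q} f_i(x+1)·Π_{j≠i} f_j(x) is divisible by q for every x, so ⟨f₁, …, f_q⟩ is a well-defined integer-valued function, and ⟨f₁, …, f_q⟩ ∈ F_q. -/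
/-- The shift operator: `(S f)(x) = f(x+1)`. -/
def shift (f : ℕ → ℤ) : ℕ → ℤ := fun x => f (x + 1)

/-- Membership in the set `F_q` of functions `f : ℕ → ℤ` with `q^n ∣ (Δ^n f)(x)`
for all `n` and `x`. -/
def memFq (q : ℕ) (f : ℕ → ℤ) : Prop :=
  ∀ (n : ℕ) (x : ℕ), (q : ℤ) ^ n ∣ (delta^[n] f) x

lemma iter_add : ∀ (n : ℕ) (f g : ℕ → ℤ) (x : ℕ),
    delta^[n] (fun x => f x + g x) x = delta^[n] f x + delta^[n] g x := by
  intro n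
  induction n with
  | zero => intro f g x; simp
  | succ n ih =>
    intro f g x
    rw [Function.iterate_succ_apply, Function.iterate_succ_apply,
      Function.iterate_succ_apply]
    have h : delta (fun x => f x + g x) = fun x => delta f x + delta g x := by
      funext y; simp only [delta]; ring
    rw [h, ih]

lemma iter_mul_const : ∀ (n : ℕ) (c : ℤ) (f : ℕ → ℤ) (x : ℕ),
    delta^[n] (fun x => c * f x) x = c * delta^[n] f x := by
  intro n
  induction n with
  | zero => intro c f x; simp
  | succ n ih =>
    intro c f x
    rw [Function.iterate_succ_apply, Function.iterate_succ_apply]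
    have h : delta (fun x => c * f x) = fun x => c * delta f x := by
      funext y; simp only [delta]; ring
    rw [h, ih]

lemma iter_shift : ∀ (n : ℕ) (f : ℕ → ℤ) (x : ℕ),
    delta^[n] (shift f) x = delta^[n] f (x + 1) := by
  intro n
  induction n with
  | zero => intro f x; rfl
  | succ n ih =>
    intro f x
    rw [Function.iterate_succ_apply, Function.iterate_succ_apply]
    have h : delta (shift f) = shift (delta f) := rfl
    rw [h, ih]

lemma memFq_shift (q : ℕ) (f : ℕ → ℤ) (hf : memFq q f) : memFq q (shift f) := by
  intro n x
  rw [iter_shift]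
  exact hf n (x + 1)

lemma memFq_const (q : ℕ) (c : ℤ) : memFq q (fun _ => c) := by
  intro n x
  cases n with
  | zero => simp
  | succ n =>
    rw [Function.iterate_succ_apply]
    have h : delta (fun _ => c) = fun _ => (0 : ℤ) := by
      funext y; simp [delta]
    rw [h, Function.iterate_fixed (by funext y; simp [delta])]
    simp

lemma memFq_add (q : ℕ) (f g : ℕ → ℤ) (hf : memFq q f) (hg : memFq q g) :
    memFq q (fun x => f x + g x) := by
  intro n x
  rw [iter_add]
  exact dvd_add (hf n x) (hg n x)

lemma memFq_div (q : ℕ) (hq : 2 ≤ q) (f : ℕ → ℤ) (hf : memFq q f) :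
    memFq q (fun x => delta f x / q) := by
  have hq0 : (q : ℤ) ≠ 0 := by exact_mod_cast (by omega : q ≠ 0)
  intro n x
  have hmul : ∀ y, (q : ℤ) * (delta f y / q) = delta f y := by
    intro y
    exact Int.mul_ediv_cancel' (by simpa using hf 1 y)
  have key : (q : ℤ) * delta^[n] (fun x => delta f x / q) x = delta^[n+1] f x := by
    rw [← iter_mul_const]
    have h : (fun x => (q : ℤ) * (delta f x / q)) = delta f := by
      funext y; exact hmul y
    rw [h, Function.iterate_succ_apply]
  have hd : (q : ℤ) * (q : ℤ) ^ n ∣ (q : ℤ) * delta^[n] (fun x => delta f x / q) x := by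
    rw [key, ← pow_succ']
    exact hf (n + 1) x
  exact (mul_dvd_mul_iff_left hq0).mp hd

lemma memFq_mul (q : ℕ) (hq : 2 ≤ q) (f g : ℕ → ℤ) (hf : memFq q f) (hg : memFq q g) :
    memFq q (fun x => f x * g x) := by
  have hq0 : (q : ℤ) ≠ 0 := by exact_mod_cast (by omega : q ≠ 0)
  intro n
  induction n generalizing f g with
  | zero => intro x; simp
  | succ n ih =>
    intro x
    set h1 : ℕ → ℤ := fun x => delta f x / q with h1def
    set h2 : ℕ → ℤ := fun x => delta g x / q with h2def
    have key : delta (fun x => f x * g x)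
        = fun x => (q : ℤ) * (h1 x * shift g x + f x * h2 x) := by
      funext y
      have e1 : (q : ℤ) * h1 y = delta f y := Int.mul_ediv_cancel' (by simpa using hf 1 y)
      have e2 : (q : ℤ) * h2 y = delta g y := Int.mul_ediv_cancel' (by simpa using hg 1 y)
      simp only [delta, shift] at e1 e2 ⊢
      linear_combination (-(g (y + 1))) * e1 + (-(f y)) * e2
    rw [Function.iterate_succ_apply, key, iter_mul_const, iter_add, pow_succ']
    exact mul_dvd_mul_left _ (dvd_add
      (ih h1 (shift g) (memFq_div q hq f hf) (memFq_shift q g hg) x)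
      (ih f h2 hf (memFq_div q hq g hg) x))

lemma memFq_prod (q : ℕ) (hq : 2 ≤ q) {ι : Type*} (s : Finset ι) (F : ι → ℕ → ℤ)
    (h : ∀ i ∈ s, memFq q (F i)) : memFq q (fun x => ∏ i ∈ s, F i x) := by
  induction s using Finset.cons_induction with
  | empty => simpa using memFq_const q 1
  | cons a s ha ih =>
    have e : (fun x => ∏ i ∈ Finset.cons a s ha, F i x)
        = fun x => F a x * ∏ i ∈ s, F i x := by
      funext x; rw [Finset.prod_cons]
    rw [e]
    exact memFq_mul q hq _ _ (h a (Finset.mem_cons_self a s))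
      (ih fun i hi => h i (Finset.mem_cons_of_mem hi))

lemma memFq_sum (q : ℕ) {ι : Type*} (s : Finset ι) (F : ι → ℕ → ℤ)
    (h : ∀ i ∈ s, memFq q (F i)) : memFq q (fun x => ∑ i ∈ s, F i x) := by
  induction s using Finset.cons_induction with
  | empty => simpa using memFq_const q 0
  | cons a s ha ih =>
    have e : (fun x => ∑ i ∈ Finset.cons a s ha, F i x)
        = fun x => F a x + ∑ i ∈ s, F i x := by
      funext x; rw [Finset.sum_cons]
    rw [e]
    exact memFq_add q _ _ (h a (Finset.mem_cons_self a s))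
      (ih fun i hi => h i (Finset.mem_cons_of_mem hi))

/-- `F_q` is closed under the shift, pointwise products, and the operation
`⟨f₁, …, f_q⟩(x) = (1/q) ∑_{i} f_i(x+1) ∏_{j≠i} f_j(x)`, which is integer-valued
on `F_q` since the numerator is always divisible by `q`. -/
theorem Fq_closure (q : ℕ) (hq : 2 ≤ q) :
    (∀ f : ℕ → ℤ, memFq q f → memFq q (shift f)) ∧
    (∀ f g : ℕ → ℤ, memFq q f → memFq q g → memFq q (fun x => f x * g x)) ∧
    (∀ f : Fin q → ℕ → ℤ, (∀ i, memFq q (f i)) →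
      (∀ x : ℕ, (q : ℤ) ∣
        ∑ i : Fin q, f i (x + 1) * ∏ j ∈ Finset.univ.erase i, f j x) ∧
      memFq q (fun x =>
        (∑ i : Fin q, f i (x + 1) * ∏ j ∈ Finset.univ.erase i, f j x) / (q : ℤ))) := by
  have hq0 : (q : ℤ) ≠ 0 := by exact_mod_cast (by omega : q ≠ 0)
  refine ⟨fun f hf => memFq_shift q f hf, fun f g hf hg => memFq_mul q hq f g hf hg, ?_⟩
  intro f hf
  set g : Fin q → ℕ → ℤ := fun i x => delta (f i) x / q with hgdef
  have hgmem : ∀ i, memFq q (g i) := fun i => memFq_div q hq (f i) (hf i)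
  have hgi : ∀ (i : Fin q) (x : ℕ), f i (x + 1) = f i x + (q : ℤ) * g i x := by
    intro i x
    have hd := Int.mul_ediv_cancel' (show (q : ℤ) ∣ delta (f i) x by simpa using hf i 1 x)
    simp only [hgdef, delta] at hd ⊢
    linarith
  have key : ∀ x : ℕ, (∑ i : Fin q, f i (x + 1) * ∏ j ∈ Finset.univ.erase i, f j x)
      = (q : ℤ) * ((∏ j : Fin q, f j x)
        + ∑ i : Fin q, g i x * ∏ j ∈ Finset.univ.erase i, f j x) := by
    intro x
    have h1 : ∀ i : Fin q, f i (x + 1) * ∏ j ∈ Finset.univ.erase i, f j x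
        = (∏ j : Fin q, f j x)
          + (q : ℤ) * (g i x * ∏ j ∈ Finset.univ.erase i, f j x) := by
      intro i
      have hp := Finset.mul_prod_erase Finset.univ (fun j : Fin q => f j x)
        (Finset.mem_univ i)
      rw [hgi i x, add_mul]
      linear_combination hp
    rw [Finset.sum_congr rfl fun i _ => h1 i, Finset.sum_add_distrib,
      Finset.sum_const, Finset.card_univ, Fintype.card_fin, ← Finset.mul_sum]
    ring
  refine ⟨fun x => ⟨_, key x⟩, ?_⟩
  have e : (fun x => (∑ i : Fin q, f i (x + 1) * ∏ j ∈ Finset.univ.erase i, f j x) / (q : ℤ))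
      = fun x => (∏ j : Fin q, f j x)
        + ∑ i : Fin q, g i x * ∏ j ∈ Finset.univ.erase i, f j x := by
    funext x
    rw [key x, Int.mul_ediv_cancel_left _ hq0]
  rw [e]
  exact memFq_add q _ _
    (memFq_prod q hq Finset.univ f fun i _ => hf i)
    (memFq_sum q Finset.univ (fun i x => g i x * ∏ j ∈ Finset.univ.erase i, f j x)
      fun i _ => memFq_mul q hq _ _ (hgmem i)
        (memFq_prod q hq _ f fun j _ => hf j))
end

section
/- Let q ≥ 2 be an integer, let F_q denote the set of functions f : ℕ → ℤ such that qⁿ ∣ (Δⁿf)(x) for all n ≥ 0 and all x ≥ 0, and let b, g₁, …, g_q ∈ F_q. Define r(x) = b(x) · ⟨g₁, …, g_q⟩(x) (which lies in F_q). Then for every m ≥ 0, ε_m^r ≡ Σ_{i₁+⋯+i_q+k=m} (m!/(i₁!⋯i_q!k!)) · ε_k^b · (ε_{i₁}^{g₁}⋯ε_{i_q}^{g_q} + ε_{i₁+1}^{g₁}ε_{i₂}^{g₂}⋯ε_{i_q}^{g_q} + ⋯ + ε_{i₁}^{g₁}⋯ε_{i_{q−1}}^{g_{q−1}}ε_{i_q+1}^{g_q})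 (mod q), where the parenthesized expression has q+1 terms: one with indices i₁, …, i_q, and q terms each with exactly one index incremented by 1. -/
/-- For `f ∈ F_q`, `epsq q f n` is (a representative in `[0, q)` of) the element of
`ℤ/qℤ` with `(Δ^n f)(x) ≡ epsq q f n · q^n (mod q^(n+1))` for all `x` (the value
is independent of `x`; we read it off at `x = 0`). -/
def epsq (q : ℕ) (f : ℕ → ℤ) (n : ℕ) : ℤ := ((delta^[n] f) 0 / (q : ℤ) ^ n) % (q : ℤ)

open Finset

lemma delta_eq_fwdDiff : delta = fwdDiff 1 := rfl

lemma delta_mul (f g : ℕ → ℤ) :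
    delta (f * g) = f * delta g + delta f * (fun x => g (x + 1)) := by
  funext x
  simp only [delta, Pi.add_apply, Pi.mul_apply]
  ring

theorem iterate_delta_mul (m : ℕ) (f g : ℕ → ℤ) (x : ℕ) :
    delta^[m] (f * g) x = ∑ p ∈ antidiagonal m,
      (m.choose p.1 : ℤ) * (delta^[p.1] f x * delta^[p.2] g (x + p.1)) := by
  induction m generalizing f g with
  | zero => simp
  | succ m ih =>
    rw [Function.iterate_succ_apply, delta_mul, delta_eq_fwdDiff, fwdDiff_iter_add,
      ← delta_eq_fwdDiff, Pi.add_apply, ih, ih,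
      sum_antidiagonal_choose_succ_mul (fun i j => delta^[i] f x * delta^[j] g (x + i))]
    congr 1
    refine sum_congr rfl fun p hp => ?_
    rw [← Nat.choose_symm_of_eq_add (mem_antidiagonal.mp hp).symm, ← Function.iterate_succ_apply,
      delta_eq_fwdDiff, fwdDiff_iter_comp_add, add_assoc]

lemma Int.ModEq.mul_of_dvd_pow {q a a' b b' : ℤ} {k l : ℕ} (ha : a ≡ a' [ZMOD q ^ (k + 1)])
    (hb : b ≡ b' [ZMOD q ^ (l + 1)]) (ha' : q ^ k ∣ a') (hb' : q ^ l ∣ b) :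
    a * b ≡ a' * b' [ZMOD q ^ (k + l + 1)] := by
  rw [Int.modEq_iff_dvd] at *
  have hsplit : a' * b' - a * b = (a' - a) * b + a' * (b' - b) := by ring
  rw [hsplit]
  exact dvd_add (by simpa [← pow_add, add_right_comm] using mul_dvd_mul ha hb')
    (by simpa [← pow_add, add_assoc] using mul_dvd_mul ha' hb)

lemma Nat.multinomial_univ_cons {s : ℕ} (k : ℕ) (a : Fin s → ℕ) :
    Nat.multinomial univ (Fin.cons k a : Fin (s + 1) → ℕ) =
      (k + ∑ t, a t).choose k * Nat.multinomial univ a := by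
  rw [Fin.univ_succ, Nat.multinomial_cons, Fin.cons_zero, sum_map]
  simp [Nat.multinomial, prod_map]

lemma Finset.Nat.sum_antidiagonalTuple_succ {M : Type*} [AddCommMonoid M] (s m : ℕ)
    (φ : (Fin (s + 1) → ℕ) → M) :
    ∑ a ∈ Nat.antidiagonalTuple (s + 1) m, φ a =
      ∑ p ∈ antidiagonal m, ∑ a ∈ Nat.antidiagonalTuple s p.2, φ (Fin.cons p.1 a) := by
  rw [sum_sigma']
  refine sum_nbij' (fun a => ⟨(a 0, m - a 0), Fin.tail a⟩) (fun x => Fin.cons x.1.1 x.2)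
    ?_ ?_ ?_ ?_ ?_
  · intro a ha
    simp only [mem_sigma, HasAntidiagonal.mem_antidiagonal, Nat.mem_antidiagonalTuple,
      Fin.sum_univ_succ] at ha ⊢
    exact ⟨by omega, by simp only [Fin.tail]; omega⟩
  · rintro ⟨⟨k, l⟩, a⟩ hx
    simp only [mem_sigma, HasAntidiagonal.mem_antidiagonal, Nat.mem_antidiagonalTuple] at hx
    simp [Nat.mem_antidiagonalTuple, Fin.sum_univ_succ, hx]
  · intro a _
    exact Fin.cons_self_tail a
  · rintro ⟨⟨k, l⟩, a⟩ hx
    simp only [mem_sigma, HasAntidiagonal.mem_antidiagonal, Nat.mem_antidiagonalTuple] at hx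
    simp [← hx.1]
  · intro a _
    rw [Fin.cons_self_tail]

lemma sum_antidiagonalTuple_succ_multinomial_mul_prod {s : ℕ} (d : Fin (s + 1) → ℕ → ℤ)
    (m : ℕ) :
    ∑ a ∈ Nat.antidiagonalTuple (s + 1) m, (Nat.multinomial univ a : ℤ) * ∏ t, d t (a t) =
      ∑ p ∈ antidiagonal m, (m.choose p.1 : ℤ) * (d 0 p.1 *
        ∑ a ∈ Nat.antidiagonalTuple s p.2,
          (Nat.multinomial univ a : ℤ) * ∏ t, d t.succ (a t)) := by
  rw [Nat.sum_antidiagonalTuple_succ]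
  refine sum_congr rfl fun p hp => ?_
  rw [mul_sum, mul_sum]
  refine sum_congr rfl fun a ha => ?_
  rw [Nat.multinomial_univ_cons, Fin.prod_univ_succ, Nat.mem_antidiagonalTuple.mp ha,
    HasAntidiagonal.mem_antidiagonal.mp hp]
  simp only [Fin.cons_zero, Fin.cons_succ]
  push_cast
  ring

/-- `d n` plays the role of `ε_n^f`: it is only meaningful modulo `q`. -/
def HasScaledDiffs (q : ℕ) (f d : ℕ → ℤ) : Prop :=
  ∀ n x, delta^[n] f x ≡ (q : ℤ) ^ n * d n [ZMOD (q : ℤ) ^ (n + 1)]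

namespace HasScaledDiffs

variable {q : ℕ} {f g d e : ℕ → ℤ}

lemma pow_dvd (hf : HasScaledDiffs q f d) (n x : ℕ) : (q : ℤ) ^ n ∣ delta^[n] f x :=
  ((hf n x).of_dvd (pow_dvd_pow _ n.le_succ)).dvd_iff.mpr (dvd_mul_right _ _)

lemma epsq_modEq (hq : q ≠ 0) (hf : HasScaledDiffs q f d) (n : ℕ) :
    epsq q f n ≡ d n [ZMOD q] := by
  obtain ⟨c, hc⟩ := (hf n 0).symm.dvd
  have hdiff : delta^[n] f 0 = (q : ℤ) ^ n * (d n + q * c) := by linear_combination hc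
  rw [epsq, hdiff, Int.mul_ediv_cancel_left _ (pow_ne_zero n (Int.natCast_ne_zero.mpr hq))]
  exact (Int.mod_modEq _ _).trans (Int.modEq_iff_dvd.mpr ⟨-c, by ring⟩)

lemma add (hf : HasScaledDiffs q f d) (hg : HasScaledDiffs q g e) :
    HasScaledDiffs q (f + g) (d + e) := fun n x => by
  simpa only [delta_eq_fwdDiff, fwdDiff_iter_add, Pi.add_apply, mul_add] using
    (hf n x).add (hg n x)

lemma sum {ι : Type*} {s : Finset ι} {f d : ι → ℕ → ℤ}
    (hf : ∀ i ∈ s, HasScaledDiffs q (f i) (d i)) :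
    HasScaledDiffs q (∑ i ∈ s, f i) (∑ i ∈ s, d i) := fun n x => by
  simpa only [delta_eq_fwdDiff, fwdDiff_iter_finsetSum, Finset.sum_apply, Finset.mul_sum] using
    Int.ModEq.sum fun i hi => hf i hi n x

lemma one : HasScaledDiffs q 1 (fun n => if n = 0 then 1 else 0) := by
  rintro (_ | n) x
  · simp
  · rw [Function.iterate_succ_apply, delta_eq_fwdDiff, show (1 : ℕ → ℤ) = fun _ => 1 from rfl,
      fwdDiff_const, Function.iterate_fixed (by rw [fwdDiff_const])]
    simp

lemma mul (hf : HasScaledDiffs q f d) (hg : HasScaledDiffs q g e) :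
    HasScaledDiffs q (f * g)
      (fun m => ∑ p ∈ antidiagonal m, (m.choose p.1 : ℤ) * (d p.1 * e p.2)) := by
  intro m x
  rw [iterate_delta_mul, Finset.mul_sum]
  refine Int.ModEq.sum fun ⟨k, l⟩ hkl => ?_
  obtain rfl : k + l = m := mem_antidiagonal.mp hkl
  have hterm := (hf k x).mul_of_dvd_pow (hg l (x + k)) (dvd_mul_right _ _) (hg.pow_dvd l _)
  calc _ ≡ ((k + l).choose k : ℤ) * (q ^ k * d k * (q ^ l * e l)) [ZMOD _] := hterm.mul_left _
    _ = _ := by ring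

lemma prod {s : ℕ} {f d : Fin s → ℕ → ℤ} (hf : ∀ t, HasScaledDiffs q (f t) (d t)) :
    HasScaledDiffs q (∏ t, f t) (fun m => ∑ a ∈ Nat.antidiagonalTuple s m,
      (Nat.multinomial univ a : ℤ) * ∏ t, d t (a t)) := by
  induction s with
  | zero =>
    rw [Fin.prod_univ_zero]
    convert one (q := q) using 2 with m
    rcases m with _ | m <;> simp
  | succ s ih =>
    rw [Fin.prod_univ_succ]
    convert (hf 0).mul (ih fun t => hf t.succ) using 2 with m
    exact sum_antidiagonalTuple_succ_multinomial_mul_prod d m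

lemma prod_snoc {s : ℕ} {f d : Fin s → ℕ → ℤ} {g e : ℕ → ℤ}
    (hf : ∀ j, HasScaledDiffs q (f j) (d j)) (hg : HasScaledDiffs q g e) :
    HasScaledDiffs q (∏ t, Fin.snoc (α := fun _ => ℕ → ℤ) f g t)
      (fun m => ∑ a ∈ Nat.antidiagonalTuple (s + 1) m,
        (Nat.multinomial univ a : ℤ) * (e (a (Fin.last s)) * ∏ j, d j (a j.castSucc))) := by
  convert prod (d := Fin.snoc (α := fun _ => ℕ → ℤ) d e) (Fin.lastCases ?_ fun j => ?_)
    using 4 with m a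
  · rw [Fin.prod_univ_castSucc, mul_comm]
    simp only [Fin.snoc_castSucc, Fin.snoc_last]
  · simpa only [Fin.snoc_last] using hg
  · simpa only [Fin.snoc_castSucc] using hf j

lemma update {s : ℕ} {f d : Fin s → ℕ → ℤ} (hf : ∀ j, HasScaledDiffs q (f j) (d j)) (i : Fin s)
    {g e : ℕ → ℤ} (hg : HasScaledDiffs q g e) (j : Fin s) :
    HasScaledDiffs q (Function.update f i g j) (Function.update d i e j) := by
  rcases eq_or_ne j i with rfl | hji
  · simpa only [Function.update_self] using hg
  · simpa only [Function.update_of_ne hji] using hf j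

lemma of_delta_eq_mul (hq : q ≠ 0) (hg : HasScaledDiffs q g e) {h : ℕ → ℤ}
    (hh : ∀ x, delta g x = q * h x) : HasScaledDiffs q h (fun n => e (n + 1)) := fun n x => by
  have hdelta : delta g = (q : ℤ) • h := funext hh
  have hsucc := hg (n + 1) x
  rw [Function.iterate_succ_apply, hdelta, delta_eq_fwdDiff, fwdDiff_iter_const_smul,
    ← delta_eq_fwdDiff, Pi.smul_apply, smul_eq_mul, pow_succ' _ n, mul_assoc, pow_succ' _ (n + 1)]
    at hsucc
  exact Int.ModEq.mul_left_cancel' (Int.natCast_ne_zero.mpr hq) hsucc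

end HasScaledDiffs

lemma memFq.iterate_delta_modEq {q : ℕ} {f : ℕ → ℤ} (hf : memFq q f) (n x : ℕ) :
    delta^[n] f x ≡ delta^[n] f 0 [ZMOD (q : ℤ) ^ (n + 1)] := by
  induction x with
  | zero => rfl
  | succ x ih =>
    have hstep := hf (n + 1) x
    rw [Function.iterate_succ_apply'] at hstep
    exact (Int.modEq_iff_dvd.mpr hstep).symm.trans ih

lemma memFq.hasScaledDiffs {q : ℕ} {f : ℕ → ℤ} (hf : memFq q f) :
    HasScaledDiffs q f (epsq q f) := fun n x => by
  refine (hf.iterate_delta_modEq n x).trans ?_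
  conv_lhs => rw [← Int.mul_ediv_cancel' (hf n 0)]
  rw [pow_succ]
  exact (Int.mod_modEq _ _).symm.mul_left'

lemma sum_add_mul_mul_prod_erase {ι R : Type*} [Fintype ι] [DecidableEq ι] [CommRing R]
    (u v : ι → R) (c : R) :
    ∑ i, (u i + c * v i) * ∏ j ∈ univ.erase i, u j =
      Fintype.card ι * ∏ i, u i + c * ∑ i, v i * ∏ j ∈ univ.erase i, u j := by
  simp only [add_mul, sum_add_distrib, mul_prod_erase univ u (mem_univ _), sum_const, card_univ,
    nsmul_eq_mul, mul_sum, mul_assoc]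

lemma prod_update_apply {ι α M : Type*} [Fintype ι] [DecidableEq ι] [CommMonoid M]
    (f : ι → α → M) (i : ι) (g : α → M) (a : ι → α) :
    ∏ j, Function.update f i g j (a j) = g (a i) * ∏ j ∈ univ.erase i, f j (a j) := by
  rw [← mul_prod_erase univ _ (mem_univ i), Function.update_self]
  congr 1
  exact prod_congr rfl fun j hj => by rw [Function.update_of_ne (ne_of_mem_erase hj)]

/-- The left side is `⟨g₁, …, g_q⟩(x)`. -/
lemma bracket_eq {q : ℕ} (hq : q ≠ 0) {g g' : Fin q → ℕ → ℤ}
    (hg' : ∀ i x, delta (g i) x = q * g' i x) (x : ℕ) :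
    (∑ i, g i (x + 1) * ∏ j ∈ univ.erase i, g j x) / q =
      ∏ i, g i x + ∑ i, ∏ j, Function.update g i (g' i) j x := by
  have hsucc (i : Fin q) : g i (x + 1) = g i x + q * g' i x := by
    rw [← hg' i x, delta, add_sub_cancel]
  simp_rw [hsucc, sum_add_mul_mul_prod_erase, Fintype.card_fin, ← mul_add,
    Int.mul_ediv_cancel_left _ (Int.natCast_ne_zero.mpr hq), prod_update_apply]

/-- The recursion for `ε_m` of `r(x) = b(x) · ⟨g₁, …, g_q⟩(x)` modulo `q`. -/
theorem epsilon_recursion_q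
    (q : ℕ) (hq : 2 ≤ q)
    (b : ℕ → ℤ) (g : Fin q → ℕ → ℤ)
    (hb : memFq q b) (hg : ∀ i, memFq q (g i))
    (r : ℕ → ℤ)
    (hr : ∀ x : ℕ, r x = b x *
      ((∑ i : Fin q, g i (x + 1) * ∏ j ∈ Finset.univ.erase i, g j x) / (q : ℤ)))
    (m : ℕ) :
    epsq q r m ≡
      ∑ a ∈ Finset.Nat.antidiagonalTuple (q + 1) m,
        (Nat.multinomial Finset.univ a : ℤ) * epsq q b (a (Fin.last q)) *
          ((∏ i : Fin q, epsq q (g i) (a i.castSucc)) +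
            ∑ i : Fin q, epsq q (g i) (a i.castSucc + 1) *
              ∏ j ∈ Finset.univ.erase i, epsq q (g j) (a j.castSucc))
      [ZMOD (q : ℤ)] := by
  have hq0 : q ≠ 0 := by omega
  choose g' hg' using fun i x => (pow_one (q : ℤ)) ▸ hg i 1 x
  have hr' : r = ∏ t, Fin.snoc (α := fun _ => ℕ → ℤ) g b t +
      ∑ i, ∏ t, Fin.snoc (α := fun _ => ℕ → ℤ) (Function.update g i (g' i)) b t := by
    funext x
    simp only [hr x, bracket_eq hq0 hg' x, Pi.add_apply, Pi.mul_apply, Finset.sum_apply,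
      Finset.prod_apply, Fin.prod_univ_castSucc, Fin.snoc_castSucc, Fin.snoc_last, mul_add,
      mul_sum, mul_comm]
  have hgε (i : Fin q) := (hg i).hasScaledDiffs
  have hrε := (HasScaledDiffs.prod_snoc hgε hb.hasScaledDiffs).add <|
    HasScaledDiffs.sum (s := univ) fun i _ => HasScaledDiffs.prod_snoc
      (HasScaledDiffs.update hgε i ((hgε i).of_delta_eq_mul hq0 (hg' i))) hb.hasScaledDiffs
  rw [hr']
  convert hrε.epsq_modEq hq0 m using 1
  simp only [Pi.add_apply, Finset.sum_apply, prod_update_apply]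
  rw [sum_comm, ← sum_add_distrib]
  refine sum_congr rfl fun a _ => ?_
  simp only [mul_add, mul_sum, mul_assoc]
end

section
/- Let p be a prime with p ≡ 3 (mod 4). Then the sequence of Morse link numbers L_n modulo p is purely periodic: there exists T > 0 such that L_{n+T} ≡ L_n (mod p) for all n ≥ 0. -/
/-- `wcat b n x`: `wcat b 0 x = 1` and
`wcat b (n+1) x = b x * ∑_{i+j=n} wcat b i (x+1) * wcat b j x`.
The weighted Catalan number `C_n^b` is `wcat b n 0`. -/
def wcat (b : ℕ → ℤ) : ℕ → ℕ → ℤ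
  | 0, _ => 1
  | n + 1, x => b x * ∑ i ∈ (Finset.range (n + 1)).attach,
      wcat b i.1 (x + 1) * wcat b (n - i.1) x
termination_by n _ => n
decreasing_by
  · exact Finset.mem_range.mp i.2
  · exact Nat.lt_succ_of_le (Nat.sub_le n i.1)

/-- `morseLink n` is the number `L_n` of combinatorial types of Morse links of
order `n`: the weighted Catalan number for the weight `b(x) = (2x+1)²`. -/
def morseLink (n : ℕ) : ℤ := wcat (fun x => (2 * (x : ℤ) + 1) ^ 2) n 0


/-!
Write `F x = ∑ₙ W_b(n, x) tⁿ`, so that `F x = 1 + b x · t · F (x + 1) · F x`. Modulo `p = 2m + 1`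
the weight `b m = p²` vanishes, hence `F m = 1`, and unwinding the recursion from `x = m` down to
`x = 0` exhibits `F 0` as a finite continued fraction `P / Q` with `Q(0) = 1`. Its denominators obey a
three-term recurrence, which gives `deg P ≤ ⌊m/2⌋` and makes the coefficient of `Q` in degree
`(m + 1)/2` a signed product of the nonzero weights `(2y + 1)²`, `y < m`. When `p ≡ 3 (mod 4)` the
number `m` is odd, so `deg P < deg Q`. Over the finite field `𝔽_p`, `X` is a unit modulo `Q`, so
`Q ∣ X^T - 1` for some `T > 0`; then `(X^T - 1) F 0` is a polynomial of degree `< T`, which is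
exactly pure periodicity of the coefficients with period `T`.
-/

open Finset Polynomial PowerSeries

theorem Polynomial.exists_dvd_X_pow_sub_one {K : Type*} [Field K] [Finite K] {Q : K[X]}
    (hQ : Q.coeff 0 ≠ 0) : ∃ T, 0 < T ∧ Q ∣ X ^ T - 1 := by
  have hQ0 : Q ≠ 0 := fun h => hQ (by simp [h])
  have := (AdjoinRoot.powerBasis hQ0).finite
  have := Module.finite_of_finite K (M := AdjoinRoot Q)
  -- `Q = Q(0) + X * S` makes the root invertible in `K[X]/(Q)`, a finite ring.
  obtain ⟨S, hS⟩ := X_dvd_sub_C (p := Q)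
  have hroot : AdjoinRoot.root Q * AdjoinRoot.mk Q (-C (Q.coeff 0)⁻¹ * S) = 1 := by
    have h := congrArg (AdjoinRoot.mk Q) hS
    simp only [map_sub, AdjoinRoot.mk_self, map_mul, AdjoinRoot.mk_X, AdjoinRoot.mk_C] at h
    calc AdjoinRoot.root Q * AdjoinRoot.mk Q (-C (Q.coeff 0)⁻¹ * S)
        = -AdjoinRoot.of Q (Q.coeff 0)⁻¹ * (AdjoinRoot.root Q * AdjoinRoot.mk Q S) := by
          simp only [map_mul, map_neg, AdjoinRoot.mk_C]; ring
      _ = AdjoinRoot.of Q ((Q.coeff 0)⁻¹ * Q.coeff 0) := by rw [← h, map_mul]; ring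
      _ = 1 := by rw [inv_mul_cancel₀ hQ, map_one]
  obtain ⟨T, hT, hpow⟩ :=
    (isOfFinOrder_of_finite (IsUnit.of_mul_eq_one _ hroot).unit).exists_pow_eq_one
  refine ⟨T, hT, AdjoinRoot.mk_eq_mk.mp ?_⟩
  simpa [Units.ext_iff] using hpow

theorem PowerSeries.periodic_coeff_of_polynomial_mul_eq {K : Type*} [Field K] [Finite K]
    {F : K⟦X⟧} {P Q : K[X]} (hQ : Q.coeff 0 ≠ 0) (hPQ : P.natDegree < Q.natDegree)
    (h : (Q : K⟦X⟧) * F = P) : ∃ T, 0 < T ∧ Function.Periodic (fun n => coeff n F) T := by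
  obtain ⟨T, hT, R, hR⟩ := Polynomial.exists_dvd_X_pow_sub_one hQ
  have hR0 : R ≠ 0 := by
    rintro rfl
    have := congrArg natDegree hR
    rw [← C_1, natDegree_X_pow_sub_C, mul_zero, natDegree_zero] at this
    omega
  have hdeg : (R * P).natDegree < T := by
    have hQR : Q.natDegree + R.natDegree = T := by
      rw [← natDegree_mul (fun h => hQ (by simp [h])) hR0, ← hR, ← C_1, natDegree_X_pow_sub_C]
    exact (natDegree_mul_le (p := R) (q := P)).trans_lt (by omega)
  have key : ((Polynomial.X ^ T - 1 : K[X]) : K⟦X⟧) * F = (R * P : K[X]) := by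
    rw [hR, Polynomial.coe_mul, Polynomial.coe_mul, ← h]
    ring
  refine ⟨T, hT, fun n => ?_⟩
  have hcoeff := congrArg (coeff (n + T)) key
  rw [Polynomial.coeff_coe, coeff_eq_zero_of_natDegree_lt (hdeg.trans_le (by omega))] at hcoeff
  simp only [Polynomial.coe_sub, Polynomial.coe_pow, Polynomial.coe_X, Polynomial.coe_one, sub_mul,
    one_mul, map_sub, coeff_X_pow_mul', le_add_self, if_true, Nat.add_sub_cancel] at hcoeff
  exact (sub_eq_zero.mp hcoeff).symm

section Continuant

variable {R : Type*} [CommRing R] (c : ℕ → R)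

noncomputable def cfDenom : ℕ → R[X]
  | 0 => 1
  | 1 => 1
  | j + 2 => cfDenom (j + 1) - Polynomial.C (c j) * Polynomial.X * cfDenom j

theorem cfDenom_add_two (j : ℕ) :
    cfDenom c (j + 2) = cfDenom c (j + 1) - Polynomial.C (c j) * Polynomial.X * cfDenom c j :=
  rfl

theorem cfDenom_mul_eq {N : ℕ} (G : ℕ → R⟦X⟧) (h0 : G 0 = 1)
    (hG : ∀ k < N, G (k + 1) = 1 + PowerSeries.C (c k) * PowerSeries.X * G k * G (k + 1)) :
    ∀ k ≤ N, (cfDenom c (k + 1) : R⟦X⟧) * G k = cfDenom c k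
  | 0, _ => by simp [cfDenom, h0]
  | k + 1, hk => by
    have ih := cfDenom_mul_eq G h0 hG k (by omega)
    rw [cfDenom_add_two, Polynomial.coe_sub, Polynomial.coe_mul, Polynomial.coe_mul,
      Polynomial.coe_C, Polynomial.coe_X]
    linear_combination (cfDenom c (k + 1) : R⟦X⟧) * hG k (by omega) +
      PowerSeries.C (c k) * PowerSeries.X * G (k + 1) * ih

theorem cfDenom_coeff_zero : ∀ j, (cfDenom c j).coeff 0 = 1
  | 0 | 1 => by simp [cfDenom]
  | j + 2 => by simp [cfDenom_add_two, cfDenom_coeff_zero (j + 1), mul_assoc]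

theorem cfDenom_natDegree_le : ∀ j, (cfDenom c j).natDegree ≤ j / 2
  | 0 | 1 => by simp [cfDenom]
  | j + 2 => by
    rw [cfDenom_add_two]
    refine (natDegree_sub_le _ _).trans (max_le ?_ ?_)
    · exact (cfDenom_natDegree_le (j + 1)).trans (by omega)
    · have hCX : (Polynomial.C (c j) * Polynomial.X).natDegree ≤ 1 :=
        (natDegree_C_mul_le _ _).trans natDegree_X_le
      have := cfDenom_natDegree_le j
      exact natDegree_mul_le.trans (by omega)

theorem cfDenom_coeff_half : ∀ k,
    (cfDenom c (2 * k)).coeff k = (-1) ^ k * ∏ i ∈ range k, c (2 * i)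
  | 0 => by simp [cfDenom]
  | k + 1 => by
    rw [show 2 * (k + 1) = 2 * k + 2 by ring, cfDenom_add_two, coeff_sub,
      coeff_eq_zero_of_natDegree_lt ((cfDenom_natDegree_le c _).trans_lt (by omega)), mul_assoc,
      Polynomial.coeff_C_mul, coeff_X_mul, cfDenom_coeff_half k, prod_range_succ]
    ring

theorem cfDenom_natDegree_eq [IsDomain R] {k : ℕ} (hc : ∀ i < k, c (2 * i) ≠ 0) :
    (cfDenom c (2 * k)).natDegree = k := by
  refine le_antisymm ((cfDenom_natDegree_le c _).trans (by omega)) (le_natDegree_of_ne_zero ?_)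
  rw [cfDenom_coeff_half]
  exact mul_ne_zero (pow_ne_zero _ (neg_ne_zero.mpr one_ne_zero))
    (prod_ne_zero_iff.mpr fun i hi => hc i (mem_range.mp hi))

end Continuant

theorem wcat_zero (b : ℕ → ℤ) (x : ℕ) : wcat b 0 x = 1 := by
  rw [wcat]

theorem wcat_succ (b : ℕ → ℤ) (n x : ℕ) :
    wcat b (n + 1) x = b x * ∑ i ∈ range (n + 1), wcat b i (x + 1) * wcat b (n - i) x := by
  rw [wcat, sum_attach (range (n + 1)) fun i => wcat b i (x + 1) * wcat b (n - i) x]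

section Series

variable (R : Type*) [CommRing R] (b : ℕ → ℤ)

noncomputable def wcatSeries (x : ℕ) : R⟦X⟧ :=
  PowerSeries.mk fun n => (wcat b n x : R)

theorem wcatSeries_eq (x : ℕ) :
    wcatSeries R b x =
      1 + PowerSeries.C (b x : R) * PowerSeries.X * wcatSeries R b (x + 1) * wcatSeries R b x := by
  ext (_ | n)
  · simp [wcatSeries, wcat_zero]
  · rw [mul_assoc, mul_assoc, map_add, PowerSeries.coeff_C_mul, PowerSeries.coeff_succ_X_mul,
      PowerSeries.coeff_mul, Nat.sum_antidiagonal_eq_sum_range_succ_mk]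
    simp [wcatSeries, wcat_succ, mul_sum]

theorem wcatSeries_eq_one {x : ℕ} (hx : (b x : R) = 0) : wcatSeries R b x = 1 := by
  rw [wcatSeries_eq, hx, map_zero, zero_mul, zero_mul, zero_mul, add_zero]

theorem cfDenom_mul_wcatSeries {m : ℕ} (hm : (b m : R) = 0) :
    (cfDenom (fun k => (b (m - 1 - k) : R)) (m + 1) : R⟦X⟧) * wcatSeries R b 0 =
      cfDenom (fun k => (b (m - 1 - k) : R)) m := by
  have h := cfDenom_mul_eq (fun k => (b (m - 1 - k) : R)) (fun k => wcatSeries R b (m - k))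
    (by simpa using wcatSeries_eq_one R b hm) (fun k hk => by
      rw [show m - k = m - (k + 1) + 1 by omega, show m - 1 - k = m - (k + 1) by omega]
      exact wcatSeries_eq R b _) m le_rfl
  simpa using h

end Series

theorem odd_sq_intCast_ne_zero {p y : ℕ} [Fact p.Prime] (hy : 2 * y + 1 < p) :
    (((2 * (y : ℤ) + 1) ^ 2 : ℤ) : ZMod p) ≠ 0 := by
  have h : ((2 * y + 1 : ℕ) : ZMod p) ≠ 0 := by
    rw [Ne, ZMod.natCast_eq_zero_iff]
    exact Nat.not_dvd_of_pos_of_lt (by omega) hy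
  push_cast at h ⊢
  exact pow_ne_zero _ h

theorem odd_sq_intCast_eq_zero {p m : ℕ} (hm : 2 * m + 1 = p) :
    (((2 * (m : ℤ) + 1) ^ 2 : ℤ) : ZMod p) = 0 := by
  have h : ((2 * m + 1 : ℕ) : ZMod p) = 0 := by rw [hm, ZMod.natCast_self]
  push_cast at h ⊢
  rw [h, zero_pow two_ne_zero]

/-- For any prime `p ≡ 3 (mod 4)`, the sequence `L_n (mod p)` is purely periodic. -/
theorem morseLink_purely_periodic_mod_p
    (p : ℕ) (hp : p.Prime) (h3 : p % 4 = 3) :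
    ∃ T : ℕ, 0 < T ∧ ∀ n : ℕ,
      morseLink (n + T) ≡ morseLink n [ZMOD (p : ℤ)] := by
  have := Fact.mk hp
  obtain ⟨m, hm⟩ : ∃ m, 2 * m + 1 = p := ⟨p / 2, by omega⟩
  obtain ⟨d, hd⟩ : ∃ d, m + 1 = 2 * d := ⟨(m + 1) / 2, by omega⟩
  set b : ℕ → ℤ := fun x => (2 * (x : ℤ) + 1) ^ 2
  set c : ℕ → ZMod p := fun k => (b (m - 1 - k) : ZMod p)
  have hrat := cfDenom_mul_wcatSeries (ZMod p) b (odd_sq_intCast_eq_zero hm)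
  have hdeg : (cfDenom c m).natDegree < (cfDenom c (m + 1)).natDegree := by
    rw [hd, cfDenom_natDegree_eq c fun i hi => odd_sq_intCast_ne_zero (by omega)]
    exact (cfDenom_natDegree_le c m).trans_lt (by omega)
  obtain ⟨T, hT, hper⟩ := PowerSeries.periodic_coeff_of_polynomial_mul_eq
    (by rw [cfDenom_coeff_zero]; exact one_ne_zero) hdeg hrat
  exact ⟨T, hT, fun n => (ZMod.intCast_eq_intCast_iff _ _ _).mp <| by
    simpa [wcatSeries, morseLink] using hper n⟩
end
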